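/- Let γ ∈ (0,2) and d ≥ 1. For any H ∈ S_γ^d there is a constant C > 0 (depending on H, γ, d) such that for every n ∈ ℕ₊, sup_{s∈[0,T]} (n^γ/n^{2d}) Σ_{x,y∈ℤ^d, x≠y} (H_s(y/n) − H_s(x/n))² p_γ(y−x) ≤ C (n + n^γ)/n^{d+1}. -/

import Mathlib

open MeasureTheory Filter Topology
open scoped ENNReal

noncomputable section

abbrev E (d : ℕ) := EuclideanSpace ℝ (Fin d)

/-- Embedding of `ℤ^d` into `ℝ^d` (with the Euclidean norm). -/
def emb (d : ℕ) (z : Fin d → ℤ) : E d := WithLp.toLp 2 (fun i => (z i : ℝ))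

/-- The last coordinate index. -/
def lastIdx (d : ℕ) (hd : 0 < d) : Fin d := ⟨d - 1, Nat.sub_lt hd Nat.one_pos⟩

/-- The open lower half-space `ℝ^{d-1} × (-∞,0)`. -/
def Hneg (d : ℕ) (hd : 0 < d) : Set (E d) := {u | u (lastIdx d hd) < 0}

/-- The open upper half-space `ℝ^{d-1} × (0,∞)`. -/
def Hpos (d : ℕ) (hd : 0 < d) : Set (E d) := {u | 0 < u (lastIdx d hd)}

/-- Truncated regional fractional Laplacian. -/
def fracTrunc (d : ℕ) (cg γ : ℝ) (O : Set (E d)) (g : E d → ℝ) (ε : ℝ) (u : E d) : ℝ :=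
  cg * ∫ v in {v ∈ O | ε ≤ dist v u}, (g u - g v) / dist v u ^ ((d : ℝ) + γ)

/-- `L` is the value of the regional fractional Laplacian of `g` at `u` (with the
convention that the value is `0` outside `O`). -/
def HasRegFracLap (d : ℕ) (cg γ : ℝ) (O : Set (E d)) (g : E d → ℝ) (u : E d) (L : ℝ) : Prop :=
  (u ∈ O ∧ Tendsto (fun ε => fracTrunc d cg γ O g ε u) (𝓝[>] 0) (𝓝 L)) ∨ (u ∉ O ∧ L = 0)

open Classical in
/-- The regional fractional Laplacian (as a limit, with junk value when it does not exist,
and `0` outside of `O`). -/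
def regFracLap (d : ℕ) (cg γ : ℝ) (O : Set (E d)) (g : E d → ℝ) (u : E d) : ℝ :=
  if u ∈ O then limUnder (𝓝[>] (0:ℝ)) (fun ε => fracTrunc d cg γ O g ε u) else 0

/-- Partial derivative in direction `e_j`. -/
def pd (d : ℕ) (f : E d → ℝ) (j : Fin d) (u : E d) : ℝ :=
  fderiv ℝ f u (EuclideanSpace.single j 1)

/-- `[G_s]_k(u)`: absolute value of `G_s(u)` plus the sum of the absolute values of all
spatial partial derivatives of order at most `k ≤ 2`. -/
def bracket (d : ℕ) (G : ℝ → E d → ℝ) (k : ℕ) (s : ℝ) (u : E d) : ℝ :=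
  |G s u| + (if 1 ≤ k then ∑ j : Fin d, |pd d (G s) j u| else 0)
    + (if 2 ≤ k then ∑ i : Fin d, ∑ j : Fin d, |pd d (fun w => pd d (G s) j w) i u| else 0)

/-- The seminorm `⦀G⦀_{r,k}`. -/
def bnorm (T : ℝ) (d : ℕ) (G : ℝ → E d → ℝ) (r k : ℕ) : ℝ :=
  ⨆ p : Set.Icc (0:ℝ) T × E d, ‖p.2‖ ^ r * bracket d G k (p.1 : ℝ) p.2

/-- The class `𝒮²(ℝ^d)`. -/
structure MemS2 (T : ℝ) (d : ℕ) (G : ℝ → E d → ℝ) : Prop where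
  cont : ContinuousOn (fun p : ℝ × E d => G p.1 p.2) (Set.Icc (0:ℝ) T ×ˢ Set.univ)
  smooth : ∀ s ∈ Set.Icc (0:ℝ) T, ContDiff ℝ 2 (G s)
  cont1 : ∀ j : Fin d,
    ContinuousOn (fun p : ℝ × E d => pd d (G p.1) j p.2) (Set.Icc (0:ℝ) T ×ˢ Set.univ)
  cont2 : ∀ i j : Fin d,
    ContinuousOn (fun p : ℝ × E d => pd d (fun w => pd d (G p.1) j w) i p.2)
      (Set.Icc (0:ℝ) T ×ˢ Set.univ)
  bdd : ∀ r : ℕ, BddAbove (Set.range fun p : Set.Icc (0:ℝ) T × E d =>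
      ‖p.2‖ ^ r * bracket d G 2 (p.1 : ℝ) p.2)

/-- The class `𝒮_c²(ℝ^d)`. -/
structure MemS2c (T : ℝ) (d : ℕ) (G : ℝ → E d → ℝ) : Prop where
  mem : MemS2 T d G
  csupp : ∃ K : Set (E d), IsCompact K ∧ ∀ s ∈ Set.Icc (0:ℝ) T, ∀ u ∉ K, G s u = 0

/-- The constant `b_G`. -/
def bG (T : ℝ) (d : ℕ) (G : ℝ → E d → ℝ) : ℝ :=
  sInf {b : ℝ | 1 < b ∧ ∀ u : E d, b ≤ ‖u‖ → ∀ s ∈ Set.Icc (0:ℝ) T, G s u = 0}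

open Classical in
/-- The class `𝒮_γ^d`. -/
def MemSgamCal (T : ℝ) (d : ℕ) (γ : ℝ) (G : ℝ → E d → ℝ) : Prop :=
  if 1 < γ ∧ d = 1 then MemS2 T d G else MemS2c T d G

open Classical in
/-- Functions glued, at the hyperplane `u_d = 0`, from two functions of class `P`. -/
def GluedFrom (d : ℕ) (hd : 0 < d) (P : (ℝ → E d → ℝ) → Prop) (G : ℝ → E d → ℝ) : Prop :=
  ∃ Gm Gp : ℝ → E d → ℝ, P Gm ∧ P Gp ∧
    ∀ s u, G s u = if u (lastIdx d hd) < 0 then Gm s u else Gp s u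

/-- Time derivative `∂_s G`. -/
def tderiv (d : ℕ) (G : ℝ → E d → ℝ) (s : ℝ) (u : E d) : ℝ := deriv (fun t => G t u) s

/-- The class `C^{1,2}([0,T] × ℝ^d)`. -/
structure MemC12 (T : ℝ) (d : ℕ) (G : ℝ → E d → ℝ) : Prop where
  cont : ContinuousOn (fun p : ℝ × E d => G p.1 p.2) (Set.Icc (0:ℝ) T ×ˢ Set.univ)
  smooth : ∀ s ∈ Set.Icc (0:ℝ) T, ContDiff ℝ 2 (G s)
  tdiff : ∀ u : E d, ∀ s ∈ Set.Icc (0:ℝ) T, DifferentiableAt ℝ (fun t => G t u) s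
  tcont : ContinuousOn (fun p : ℝ × E d => tderiv d G p.1 p.2) (Set.Icc (0:ℝ) T ×ˢ Set.univ)
  cont1 : ∀ j : Fin d,
    ContinuousOn (fun p : ℝ × E d => pd d (G p.1) j p.2) (Set.Icc (0:ℝ) T ×ˢ Set.univ)
  cont2 : ∀ i j : Fin d,
    ContinuousOn (fun p : ℝ × E d => pd d (fun w => pd d (G p.1) j w) i p.2)
      (Set.Icc (0:ℝ) T ×ˢ Set.univ)

/-- The class `C_c^{1,2}([0,T] × ℝ^d)`. -/
structure MemCc12 (T : ℝ) (d : ℕ) (G : ℝ → E d → ℝ) : Prop where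
  mem : MemC12 T d G
  csupp : ∃ K : Set (E d), IsCompact K ∧ ∀ s ∈ Set.Icc (0:ℝ) T, ∀ u ∉ K, G s u = 0

/-- The class `S^{1,2}([0,T] × ℝ^d)`. -/
structure MemS12 (T : ℝ) (d : ℕ) (G : ℝ → E d → ℝ) : Prop where
  mem : MemC12 T d G
  tsmooth : ∀ s ∈ Set.Icc (0:ℝ) T, ContDiff ℝ 2 (fun u => tderiv d G s u)
  bdd : ∀ k : ℕ, BddAbove (Set.range fun p : Set.Icc (0:ℝ) T × E d =>
      ‖p.2‖ ^ k * (bracket d G 2 (p.1 : ℝ) p.2 + bracket d (tderiv d G) 2 (p.1 : ℝ) p.2))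

open Classical in
/-- The class `S_γ^d`. -/
def MemSgam (T : ℝ) (d : ℕ) (γ : ℝ) (G : ℝ → E d → ℝ) : Prop :=
  if 1 < γ ∧ d = 1 then MemS12 T d G else MemCc12 T d G

/-- The class `S_{γ,0}^d`. -/
def MemSgam0 (T : ℝ) (d : ℕ) (hd : 0 < d) (γ : ℝ) (G : ℝ → E d → ℝ) : Prop :=
  GluedFrom d hd (MemSgam T d γ) G

open Classical in
/-- The class `S_{γ,κ}^d`. -/
def MemSgamK (T : ℝ) (d : ℕ) (hd : 0 < d) (γ κ : ℝ) (G : ℝ → E d → ℝ) : Prop :=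
  if κ = 0 then MemSgam0 T d hd γ G else MemSgam T d γ G

/-- The kernel `K_H^γ(u,v)`. -/
def Kg (d : ℕ) (cg γ : ℝ) (H : E d → ℝ) (u v : E d) : ℝ :=
  cg * (H u - H v) / ‖u - v‖ ^ ((d : ℝ) + γ)

open Classical in
/-- Discrete regional fractional Laplacian `Δ_{n,C}^{γ/2}` associated to a set of bonds. -/
def discOp (d : ℕ) (cg γ : ℝ) (n : ℕ) (rel : (Fin d → ℤ) → (Fin d → ℤ) → Prop)
    (H : E d → ℝ) (x : Fin d → ℤ) : ℝ :=
  (n : ℝ)⁻¹ ^ d * ∑' y : Fin d → ℤ,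
    if rel x y then Kg d cg γ H ((n : ℝ)⁻¹ • emb d x) ((n : ℝ)⁻¹ • emb d y) else 0

/-- `{x,y}` is a slow bond. -/
def slowRel (d : ℕ) (hd : 0 < d) (x y : Fin d → ℤ) : Prop :=
  (x (lastIdx d hd) < 0 ∧ 0 ≤ y (lastIdx d hd)) ∨ (y (lastIdx d hd) < 0 ∧ 0 ≤ x (lastIdx d hd))

/-- `{x,y}` is a fast bond. -/
def fastRel (d : ℕ) (hd : 0 < d) (x y : Fin d → ℤ) : Prop :=
  x ≠ y ∧ ¬ slowRel d hd x y

/-- The distorted fractional Laplacian `𝕃_κ^γ`. -/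
def Lkappa (d : ℕ) (hd : 0 < d) (cg γ κ : ℝ) (g : E d → ℝ) (u : E d) : ℝ :=
  κ * regFracLap d cg γ Set.univ g u
    + (1 - κ) * (regFracLap d cg γ (Hneg d hd) g u + regFracLap d cg γ (Hpos d hd) g u)

/-- The sequence `r_n^γ`. -/
def rn (γ : ℝ) (n : ℕ) : ℝ :=
  if γ < 1 then 1 else if γ = 1 then Real.log n else (n : ℝ) ^ (γ - 1)

open Classical in
/-- The long-range transition probability `p_γ`. -/
def pgam (d : ℕ) (cg γ : ℝ) (z : Fin d → ℤ) : ℝ :=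
  if z = 0 then 0 else cg * ‖emb d z‖ ^ (-((d : ℝ) + γ))

/-- The symmetric second difference `Δ_w G_s(u)`. -/
def ddiff (d : ℕ) (G : ℝ → E d → ℝ) (s : ℝ) (w u : E d) : ℝ :=
  G s (u + w) - 2 * G s u + G s (u - w)

/-- The discrete gradient `∇_j^{(n)} G_s(u)`. -/
def ndiff (d : ℕ) (G : ℝ → E d → ℝ) (s : ℝ) (j : Fin d) (n : ℕ) (u : E d) : ℝ :=
  G s (u + (n : ℝ)⁻¹ • EuclideanSpace.single j 1) - G s u

/-- The class `𝒮⁰(ℝ^d)`. -/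
structure MemS0 (T : ℝ) (d : ℕ) (G : ℝ → E d → ℝ) : Prop where
  cont : ContinuousOn (fun p : ℝ × E d => G p.1 p.2) (Set.Icc (0:ℝ) T ×ˢ Set.univ)
  bdd : ∀ r : ℕ, ∃ C : ℝ, ∀ s ∈ Set.Icc (0:ℝ) T, ∀ u : E d, ‖u‖ ^ r * |G s u| ≤ C

/-- The class `𝒮_c⁰(ℝ^d)`. -/
structure MemS0c (T : ℝ) (d : ℕ) (G : ℝ → E d → ℝ) : Prop where
  mem : MemS0 T d G
  csupp : ∃ K : Set (E d), IsCompact K ∧ ∀ s ∈ Set.Icc (0:ℝ) T, ∀ u ∉ K, G s u = 0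

end

noncomputable section
open scoped Classical

section AuxStmt13
variable {d : ℕ}

lemma abs_coord_le (v : E d) (i : Fin d) : |v i| ≤ ‖v‖ := by
  rw [EuclideanSpace.norm_eq, ← Real.sqrt_sq_eq_abs]
  apply Real.sqrt_le_sqrt
  have : ‖v i‖ ^ 2 = v i ^ 2 := by simp [Real.norm_eq_abs, sq_abs]
  rw [← this]
  exact Finset.single_le_sum (f := fun j => ‖v j‖ ^ 2) (fun j _ => by positivity) (Finset.mem_univ i)

lemma emb_add (x z : Fin d → ℤ) : emb d (x + z) = emb d x + emb d z := by
  ext i; simp [emb]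

lemma one_le_norm_emb {z : Fin d → ℤ} (hz : z ≠ 0) : 1 ≤ ‖emb d z‖ := by
  obtain ⟨i, hi⟩ : ∃ i, z i ≠ 0 := by
    by_contra h; push_neg at h; exact hz (funext h)
  calc (1:ℝ) ≤ |(z i : ℝ)| := by
        rw [← Int.cast_abs]; exact_mod_cast Int.one_le_abs hi
    _ ≤ ‖emb d z‖ := abs_coord_le (emb d z) i

lemma euclid_decomp (v : E d) : v = ∑ j, v j • EuclideanSpace.single j (1:ℝ) := by
  ext i
  rw [WithLp.ofLp_sum, Finset.sum_apply]
  simp [EuclideanSpace.single_apply]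

lemma opNorm_le_sum (L : E d →L[ℝ] ℝ) :
    ‖L‖ ≤ ∑ j, |L (EuclideanSpace.single j 1)| := by
  refine ContinuousLinearMap.opNorm_le_bound _ (Finset.sum_nonneg fun j _ => abs_nonneg _) fun v => ?_
  conv_lhs => rw [euclid_decomp v]
  rw [map_sum]
  simp only [L.map_smul, smul_eq_mul]
  calc ‖∑ j, v j * L (EuclideanSpace.single j 1)‖
      ≤ ∑ j, ‖v j * L (EuclideanSpace.single j 1)‖ := norm_sum_le _ _
    _ ≤ ∑ j, |L (EuclideanSpace.single j 1)| * ‖v‖ := by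
        refine Finset.sum_le_sum fun j _ => ?_
        rw [norm_mul, Real.norm_eq_abs, Real.norm_eq_abs, mul_comm]
        exact mul_le_mul_of_nonneg_left (abs_coord_le v j) (abs_nonneg _)
    _ = (∑ j, |L (EuclideanSpace.single j 1)|) * ‖v‖ := by rw [Finset.sum_mul]

lemma seg_dist (u v w : E d) (hw : w ∈ segment ℝ u v) : ‖w - u‖ ≤ ‖v - u‖ := by
  obtain ⟨a, b, ha, hb, hab, rfl⟩ := hw
  have h : a • u + b • v - u = b • (v - u) := by
    have hb1 : (1:ℝ) - a = b := by linarith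
    rw [smul_sub, ← hb1]; module
  rw [h, norm_smul, Real.norm_eq_abs, abs_of_nonneg hb]
  nlinarith [norm_nonneg (v - u)]

lemma diff_le (f : E d → ℝ) (hf : Differentiable ℝ f) (u v : E d) (c : ℝ)
    (hc : ∀ w ∈ segment ℝ u v, (∑ j, |pd d f j w|) ≤ c) : |f v - f u| ≤ c * ‖v - u‖ := by
  rw [← Real.norm_eq_abs]
  refine Convex.norm_image_sub_le_of_norm_fderiv_le (fun w _ => hf w) ?_
    (convex_segment u v) (left_mem_segment ℝ u v) (right_mem_segment ℝ u v)
  intro w hw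
  exact le_trans (opNorm_le_sum _) (hc w hw)
-- batch 2: ENNReal helpers and lattice counting
lemma real_tsum_le {ι : Type*} (f : ι → ℝ) (hf : ∀ i, 0 ≤ f i) {c : ℝ} (hc : 0 ≤ c)
    (h : ∑' i, ENNReal.ofReal (f i) ≤ ENNReal.ofReal c) : ∑' i, f i ≤ c := by
  by_cases hs : Summable f
  · rw [← ENNReal.ofReal_le_ofReal_iff hc, ENNReal.ofReal_tsum_of_nonneg hf hs]
    exact h
  · rw [tsum_eq_zero_of_not_summable hs]; exact hc

lemma ofReal_tsum_le {ι : Type*} (f : ι → ℝ) (hf : ∀ i, 0 ≤ f i) :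
    ENNReal.ofReal (∑' i, f i) ≤ ∑' i, ENNReal.ofReal (f i) := by
  by_cases hs : Summable f
  · rw [ENNReal.ofReal_tsum_of_nonneg hf hs]
  · rw [tsum_eq_zero_of_not_summable hs]; simp

set_option maxHeartbeats 2000000 in
lemma count_le {B : ℝ} (hB : 0 ≤ B) :
    (∑' z : Fin d → ℤ, if ‖emb d z‖ ≤ B then (1:ℝ≥0∞) else 0)
      ≤ ENNReal.ofReal ((2*B+1)^d) := by
  set m : ℕ := ⌊B⌋₊ with hm
  set S : Finset (Fin d → ℤ) := Fintype.piFinset (fun _ => Finset.Icc (-(m:ℤ)) m) with hS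
  have hsub : ∀ z : Fin d → ℤ, ‖emb d z‖ ≤ B → z ∈ S := by
    intro z hz
    rw [hS, Fintype.mem_piFinset]
    intro i
    have h1 : |(z i : ℝ)| ≤ B := le_trans (abs_coord_le (emb d z) i) hz
    have h2 : |z i| ≤ (m:ℤ) := by
      have : ((|z i| : ℤ) : ℝ) ≤ B := by rwa [Int.cast_abs]
      have hlt : ((|z i| : ℤ) : ℝ) < (m:ℝ) + 1 := lt_of_le_of_lt this (Nat.lt_floor_add_one B)
      have h3 : |z i| < (m:ℤ) + 1 := by exact_mod_cast hlt
      omega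
    rw [Finset.mem_Icc]
    exact abs_le.mp h2
  calc (∑' z : Fin d → ℤ, if ‖emb d z‖ ≤ B then (1:ℝ≥0∞) else 0)
      ≤ ∑' z : Fin d → ℤ, (if z ∈ S then (1:ℝ≥0∞) else 0) := by
        refine ENNReal.summable.tsum_le_tsum (fun z => ?_) ENNReal.summable
        by_cases h : ‖emb d z‖ ≤ B
        · simp [h, hsub z h]
        · simp [h]
    _ = ∑ z ∈ S, (if z ∈ S then (1:ℝ≥0∞) else 0) := tsum_eq_sum (fun z hz => by simp [hz])
    _ = ∑ z ∈ S, (1:ℝ≥0∞) := Finset.sum_congr rfl (fun z hz => by simp [hz])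
    _ = (S.card : ℝ≥0∞) := by simp
    _ ≤ ENNReal.ofReal ((2*B+1)^d) := by
        have hcard : S.card = (2*m+1)^d := by
          rw [hS, Fintype.card_piFinset]
          simp only [Int.card_Icc]
          rw [Finset.prod_const, Finset.card_univ, Fintype.card_fin]
          congr 1
          omega
        rw [hcard]
        rw [← ENNReal.ofReal_natCast]
        refine ENNReal.ofReal_le_ofReal ?_
        push_cast
        refine pow_le_pow_left₀ (by positivity) ?_ d
        have := Nat.floor_le hB
        push_cast
        linarith
lemma rpow_anti {x y e : ℝ} (hx : 0 < x) (hxy : x ≤ y) (he : 0 ≤ e) :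
    y ^ (-e) ≤ x ^ (-e) := by
  rw [Real.rpow_neg (by linarith), Real.rpow_neg hx.le]
  exact inv_anti₀ (Real.rpow_pos_of_pos hx e) (Real.rpow_le_rpow hx.le hxy he)

lemma shell_term_le {c S : ℝ} (hS : 0 < S) {t : ℝ} (h1 : S < t) (h2 : t ≤ 2*S) :
    t ^ (-c) ≤ (1 + 2 ^ (-c)) * S ^ (-c) := by
  have ht : 0 < t := lt_trans hS h1
  rcases le_or_gt 0 c with hc | hc
  · have := rpow_anti hS h1.le hc
    have h2c : (0:ℝ) ≤ 2 ^ (-c) := Real.rpow_nonneg (by norm_num) _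
    nlinarith [Real.rpow_pos_of_pos hS (-c)]
  · -- c < 0 : t ^ (-c) increasing in t
    have : t ^ (-c) ≤ (2*S) ^ (-c) := Real.rpow_le_rpow ht.le h2 (by linarith)
    have h2S : (2*S) ^ (-c) = 2 ^ (-c) * S ^ (-c) := Real.mul_rpow (by norm_num) hS.le
    nlinarith [Real.rpow_pos_of_pos hS (-c)]

lemma shell_le (c S : ℝ) (hS : 0 < S) :
    (∑' z : Fin d → ℤ, if S < ‖emb d z‖ ∧ ‖emb d z‖ ≤ 2*S
        then ENNReal.ofReal (‖emb d z‖ ^ (-c)) else 0)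
      ≤ ENNReal.ofReal (6^d * (1 + 2 ^ (-c)) * S ^ ((d:ℝ) - c)) := by
  have hSd : S ^ ((d:ℝ) - c) = S ^ (d:ℝ) * S ^ (-c) := by
    rw [← Real.rpow_add hS]; ring_nf
  by_cases hempty : 2*S < 1
  · have hz : ∀ z : Fin d → ℤ, (if S < ‖emb d z‖ ∧ ‖emb d z‖ ≤ 2*S
        then ENNReal.ofReal (‖emb d z‖ ^ (-c)) else 0) = 0 := by
      intro z
      rw [if_neg]
      rintro ⟨h1, h2⟩
      have hz0 : z ≠ 0 := by
        rintro rfl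
        have h0 : emb d (0 : Fin d → ℤ) = 0 := by ext i; simp [emb]
        rw [h0, norm_zero] at h1
        linarith
      linarith [one_le_norm_emb hz0]
    simp only [hz, tsum_zero]
    positivity
  push_neg at hempty
  calc (∑' z : Fin d → ℤ, if S < ‖emb d z‖ ∧ ‖emb d z‖ ≤ 2*S
        then ENNReal.ofReal (‖emb d z‖ ^ (-c)) else 0)
      ≤ ∑' z : Fin d → ℤ, ENNReal.ofReal ((1 + 2 ^ (-c)) * S ^ (-c)) *
          (if ‖emb d z‖ ≤ 2*S then (1:ℝ≥0∞) else 0) := by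
        refine ENNReal.summable.tsum_le_tsum (fun z => ?_) ENNReal.summable
        by_cases h : S < ‖emb d z‖ ∧ ‖emb d z‖ ≤ 2*S
        · rw [if_pos h, if_pos h.2, mul_one]
          exact ENNReal.ofReal_le_ofReal (shell_term_le hS h.1 h.2)
        · rw [if_neg h]
          exact zero_le
    _ = ENNReal.ofReal ((1 + 2 ^ (-c)) * S ^ (-c)) *
          ∑' z : Fin d → ℤ, (if ‖emb d z‖ ≤ 2*S then (1:ℝ≥0∞) else 0) := ENNReal.tsum_mul_left
    _ ≤ ENNReal.ofReal ((1 + 2 ^ (-c)) * S ^ (-c)) * ENNReal.ofReal ((2*(2*S)+1)^d) :=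
        mul_le_mul' le_rfl (count_le (by linarith))
    _ ≤ ENNReal.ofReal (6^d * (1 + 2 ^ (-c)) * S ^ ((d:ℝ) - c)) := by
        rw [← ENNReal.ofReal_mul (by positivity)]
        refine ENNReal.ofReal_le_ofReal ?_
        rw [hSd]
        have h1 : (2*(2*S)+1)^d ≤ (6*S)^d := by
          refine pow_le_pow_left₀ (by linarith) (by linarith) d
        have h2 : (6*S)^d = 6^d * S^d := mul_pow 6 S d
        have h3 : (S:ℝ)^d = S ^ (d:ℝ) := (Real.rpow_natCast S d).symm
        have hpos : (0:ℝ) ≤ (1 + 2 ^ (-c)) * S ^ (-c) := by positivity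
        calc (1 + 2 ^ (-c)) * S ^ (-c) * (2*(2*S)+1)^d
            ≤ (1 + 2 ^ (-c)) * S ^ (-c) * (6^d * S^d) := by
              refine mul_le_mul_of_nonneg_left ?_ hpos
              rw [← h2]; exact h1
          _ = 6^d * (1 + 2 ^ (-c)) * (S ^ (d:ℝ) * S ^ (-c)) := by rw [← h3]; ring
lemma my_geom_le {r : ℝ} (h0 : 0 ≤ r) (h1 : r < 1) {c : ℝ} (hc : 0 ≤ c) :
    (∑' k : ℕ, ENNReal.ofReal (c * r ^ k)) ≤ ENNReal.ofReal (c * (1 - r)⁻¹) := by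
  have key : ∀ k : ℕ, ENNReal.ofReal (c * r ^ k)
      = ENNReal.ofReal c * (ENNReal.ofReal r) ^ k := by
    intro k
    rw [ENNReal.ofReal_mul hc, ENNReal.ofReal_pow h0]
  simp only [key]
  rw [ENNReal.tsum_mul_left, ENNReal.tsum_geometric]
  have h2 : (1 : ℝ≥0∞) - ENNReal.ofReal r = ENNReal.ofReal (1 - r) := by
    rw [ENNReal.ofReal_sub 1 h0, ENNReal.ofReal_one]
  rw [h2, ← ENNReal.ofReal_inv_of_pos (by linarith), ← ENNReal.ofReal_mul hc]

lemma tail_le (c : ℝ) (hc : (d:ℝ) < c) :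
    ∃ C : ℝ, 0 < C ∧ ∀ R : ℝ, 1 ≤ R →
      (∑' z : Fin d → ℤ, if R < ‖emb d z‖ then ENNReal.ofReal (‖emb d z‖ ^ (-c)) else 0)
        ≤ ENNReal.ofReal (C * R ^ ((d:ℝ) - c)) := by
  set r : ℝ := 2 ^ ((d:ℝ) - c) with hr
  have hr0 : 0 < r := Real.rpow_pos_of_pos (by norm_num) _
  have hr1 : r < 1 := Real.rpow_lt_one_of_one_lt_of_neg (by norm_num) (by linarith)
  set A : ℝ := 6^d * (1 + 2 ^ (-c)) with hA
  have hA0 : 0 < A := by positivity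
  refine ⟨A * (1 - r)⁻¹, mul_pos hA0 (inv_pos.2 (by linarith)), fun R hR => ?_⟩
  have hRpos : (0:ℝ) < R := by linarith
  set g : ℕ → (Fin d → ℤ) → ℝ≥0∞ := fun k z =>
    if (2^k * R) < ‖emb d z‖ ∧ ‖emb d z‖ ≤ 2*(2^k * R)
      then ENNReal.ofReal (‖emb d z‖ ^ (-c)) else 0 with hg
  have hpt : ∀ z : Fin d → ℤ,
      (if R < ‖emb d z‖ then ENNReal.ofReal (‖emb d z‖ ^ (-c)) else 0) ≤ ∑' k, g k z := by
    intro z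
    by_cases h : R < ‖emb d z‖
    · rw [if_pos h]
      have hex : ∃ k : ℕ, ‖emb d z‖ ≤ 2^(k+1) * R := by
        obtain ⟨m, hm⟩ := pow_unbounded_of_one_lt ‖emb d z‖ (by norm_num : (1:ℝ) < 2)
        refine ⟨m, ?_⟩
        have h2m : (2:ℝ)^(m+1) = 2^m * 2 := pow_succ 2 m
        nlinarith [pow_pos (by norm_num : (0:ℝ) < 2) m]
      set k₀ := Nat.find hex with hk₀
      have hup : ‖emb d z‖ ≤ 2^(k₀+1) * R := Nat.find_spec hex
      have hlow : 2^k₀ * R < ‖emb d z‖ := by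
        rcases Nat.eq_zero_or_pos k₀ with h0 | h0
        · rw [h0]; simpa using h
        · have := Nat.find_min hex (show k₀ - 1 < k₀ by omega)
          push_neg at this
          have heq : (k₀ - 1) + 1 = k₀ := by omega
          rwa [heq] at this
      have : ENNReal.ofReal (‖emb d z‖ ^ (-c)) = g k₀ z := by
        rw [hg]
        simp only []
        have h2k : (2:ℝ)^(k₀+1) = 2^k₀ * 2 := pow_succ 2 k₀
        rw [if_pos ⟨hlow, by nlinarith [hup]⟩]
      rw [this]
      exact ENNReal.le_tsum k₀
    · rw [if_neg h]; exact zero_le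
  calc (∑' z : Fin d → ℤ, if R < ‖emb d z‖ then ENNReal.ofReal (‖emb d z‖ ^ (-c)) else 0)
      ≤ ∑' z : Fin d → ℤ, ∑' k : ℕ, g k z :=
        ENNReal.summable.tsum_le_tsum hpt ENNReal.summable
    _ = ∑' k : ℕ, ∑' z : Fin d → ℤ, g k z := ENNReal.tsum_comm
    _ ≤ ∑' k : ℕ, ENNReal.ofReal ((A * R ^ ((d:ℝ) - c)) * r ^ k) := by
        refine ENNReal.summable.tsum_le_tsum (fun k => ?_) ENNReal.summable
        have hSk : (0:ℝ) < 2^k * R := by positivity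
        refine le_trans (shell_le c (2^k * R) hSk) (ENNReal.ofReal_le_ofReal ?_)
        have hexp : (2^k * R) ^ ((d:ℝ) - c) = r^k * R ^ ((d:ℝ) - c) := by
          rw [Real.mul_rpow (by positivity) hRpos.le]
          congr 1
          rw [← Real.rpow_natCast (2:ℝ) k, ← Real.rpow_mul (by norm_num),
            ← Real.rpow_natCast (2 ^ ((d:ℝ)-c)) k, ← Real.rpow_mul (by norm_num)]
          ring_nf
        rw [hA, hexp]; ring_nf; rfl
    _ ≤ ENNReal.ofReal ((A * R ^ ((d:ℝ) - c)) * (1 - r)⁻¹) :=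
        my_geom_le hr0.le hr1 (by positivity)
    _ = ENNReal.ofReal (A * (1 - r)⁻¹ * R ^ ((d:ℝ) - c)) := by ring_nf
lemma near_le (c : ℝ) (hc : c < (d:ℝ)) :
    ∃ C : ℝ, 0 < C ∧ ∀ R : ℝ, 1 ≤ R →
      (∑' z : Fin d → ℤ, if z ≠ 0 ∧ ‖emb d z‖ ≤ R
          then ENNReal.ofReal (‖emb d z‖ ^ (-c)) else 0)
        ≤ ENNReal.ofReal (C * R ^ ((d:ℝ) - c)) := by
  set r : ℝ := 2 ^ (c - (d:ℝ)) with hr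
  have hr0 : 0 < r := Real.rpow_pos_of_pos (by norm_num) _
  have hr1 : r < 1 := Real.rpow_lt_one_of_one_lt_of_neg (by norm_num) (by linarith)
  set A : ℝ := 6^d * (1 + 2 ^ (-c)) with hA
  have hA0 : 0 < A := by positivity
  refine ⟨A * (1 - r)⁻¹, mul_pos hA0 (inv_pos.2 (by linarith)), fun R hR => ?_⟩
  have hRpos : (0:ℝ) < R := by linarith
  set g : ℕ → (Fin d → ℤ) → ℝ≥0∞ := fun k z =>
    if (R/2^(k+1)) < ‖emb d z‖ ∧ ‖emb d z‖ ≤ 2*(R/2^(k+1))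
      then ENNReal.ofReal (‖emb d z‖ ^ (-c)) else 0 with hg
  have hpt : ∀ z : Fin d → ℤ,
      (if z ≠ 0 ∧ ‖emb d z‖ ≤ R then ENNReal.ofReal (‖emb d z‖ ^ (-c)) else 0)
        ≤ ∑' k, g k z := by
    intro z
    by_cases h : z ≠ 0 ∧ ‖emb d z‖ ≤ R
    · rw [if_pos h]
      have h1 : 1 ≤ ‖emb d z‖ := one_le_norm_emb h.1
      have hex : ∃ k : ℕ, R/2^(k+1) < ‖emb d z‖ := by
        obtain ⟨m, hm⟩ := pow_unbounded_of_one_lt R (by norm_num : (1:ℝ) < 2)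
        refine ⟨m, ?_⟩
        have h2m : (2:ℝ)^(m+1) = 2^m * 2 := pow_succ 2 m
        have hp : (0:ℝ) < 2^(m+1) := by positivity
        rw [div_lt_iff₀ hp]
        nlinarith [pow_pos (by norm_num : (0:ℝ) < 2) m]
      set k₀ := Nat.find hex with hk₀
      have hlow : R/2^(k₀+1) < ‖emb d z‖ := Nat.find_spec hex
      have hup : ‖emb d z‖ ≤ 2*(R/2^(k₀+1)) := by
        have h2k : (2:ℝ)^(k₀+1) = 2^k₀ * 2 := pow_succ 2 k₀
        rcases Nat.eq_zero_or_pos k₀ with h0 | h0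
        · rw [h0] at h2k ⊢
          have : 2*(R/2^(0+1)) = R := by ring
          rw [this]; exact h.2
        · have hmin := Nat.find_min hex (show k₀ - 1 < k₀ by omega)
          push_neg at hmin
          have heq : (k₀ - 1) + 1 = k₀ := by omega
          rw [heq] at hmin
          have hpk : (0:ℝ) < 2^k₀ := by positivity
          calc ‖emb d z‖ ≤ R/2^k₀ := hmin
            _ = 2*(R/2^(k₀+1)) := by rw [h2k]; field_simp
      have : ENNReal.ofReal (‖emb d z‖ ^ (-c)) = g k₀ z := by
        rw [hg]; simp only []
        rw [if_pos ⟨hlow, hup⟩]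
      rw [this]
      exact ENNReal.le_tsum k₀
    · rw [if_neg h]; exact zero_le
  calc (∑' z : Fin d → ℤ, if z ≠ 0 ∧ ‖emb d z‖ ≤ R
          then ENNReal.ofReal (‖emb d z‖ ^ (-c)) else 0)
      ≤ ∑' z : Fin d → ℤ, ∑' k : ℕ, g k z :=
        ENNReal.summable.tsum_le_tsum hpt ENNReal.summable
    _ = ∑' k : ℕ, ∑' z : Fin d → ℤ, g k z := ENNReal.tsum_comm
    _ ≤ ∑' k : ℕ, ENNReal.ofReal ((A * R ^ ((d:ℝ) - c)) * r ^ k) := by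
        refine ENNReal.summable.tsum_le_tsum (fun k => ?_) ENNReal.summable
        have hSk : (0:ℝ) < R/2^(k+1) := by positivity
        refine le_trans (shell_le c (R/2^(k+1)) hSk) (ENNReal.ofReal_le_ofReal ?_)
        have hexp : (R/2^(k+1)) ^ ((d:ℝ) - c) = R ^ ((d:ℝ) - c) * (r^(k+1)) := by
          have e1 : ((2:ℝ)^(k+1))^((d:ℝ)-c) = (2:ℝ) ^ ((((k+1):ℕ):ℝ) * ((d:ℝ)-c)) := by
            rw [← Real.rpow_natCast (2:ℝ) (k+1), ← Real.rpow_mul (by norm_num)]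
          have e2 : r^(k+1) = (2:ℝ) ^ ((c - (d:ℝ)) * (((k+1):ℕ):ℝ)) := by
            rw [hr, ← Real.rpow_natCast ((2:ℝ) ^ (c - (d:ℝ))) (k+1), ← Real.rpow_mul (by norm_num)]
          rw [Real.div_rpow hRpos.le (by positivity), e1, div_eq_mul_inv, e2,
            ← Real.rpow_neg (by norm_num)]
          congr 1
          ring
        have hrk : r^(k+1) ≤ r^k := by
          have := pow_le_pow_of_le_one hr0.le hr1.le (show k ≤ k+1 by omega)
          exact this
        have hnn : (0:ℝ) ≤ A := hA0.le
        have hRd : (0:ℝ) ≤ R ^ ((d:ℝ) - c) := Real.rpow_nonneg hRpos.le _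
        calc A * (R/2^(k+1)) ^ ((d:ℝ) - c) = A * (R ^ ((d:ℝ) - c) * r^(k+1)) := by rw [hexp]
          _ ≤ A * (R ^ ((d:ℝ) - c) * r^k) :=
              mul_le_mul_of_nonneg_left (mul_le_mul_of_nonneg_left hrk hRd) hnn
          _ = A * R ^ ((d:ℝ) - c) * r^k := by ring
    _ ≤ ENNReal.ofReal ((A * R ^ ((d:ℝ) - c)) * (1 - r)⁻¹) :=
        my_geom_le hr0.le hr1 (by positivity)
    _ = ENNReal.ofReal (A * (1 - r)⁻¹ * R ^ ((d:ℝ) - c)) := by ring_nf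
lemma pgam_nonneg {cg γ : ℝ} (hcg : 0 ≤ cg) (z : Fin d → ℤ) : 0 ≤ pgam d cg γ z := by
  unfold pgam; split <;> positivity

lemma ofReal_combine {cg a b c e : ℝ} (hcg : 0 ≤ cg) (ha : 0 ≤ a) (hb : 0 ≤ b)
    (hc : 0 ≤ c) (he : 0 ≤ e) :
    ENNReal.ofReal cg * (ENNReal.ofReal a * ENNReal.ofReal b * ENNReal.ofReal c
      + (2 * ENNReal.ofReal b * ENNReal.ofReal e + 2 * ENNReal.ofReal e * ENNReal.ofReal b))
    = ENNReal.ofReal (cg * (a * (b * c) + 4 * (b * e))) := by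
  rw [ENNReal.ofReal_mul hcg, ENNReal.ofReal_add (by positivity) (by positivity),
    ENNReal.ofReal_mul ha, ENNReal.ofReal_mul hb,
    ENNReal.ofReal_mul (by norm_num : (0:ℝ) ≤ 4), ENNReal.ofReal_mul hb]
  rw [show ENNReal.ofReal (4:ℝ) = (4:ℝ≥0∞) by norm_num]
  ring

lemma main_bound (γ cg T : ℝ) (hγ : γ ∈ Set.Ioo (0:ℝ) 2) (hcg : 0 < cg)
    (H : ℝ → E d → ℝ) (ψ : E d → ℝ)
    (hψ0 : ∀ u, 0 ≤ ψ u)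
    (h1 : ∀ s ∈ Set.Icc (0:ℝ) T, ∀ u v : E d, ‖v - u‖ ≤ 1 →
      |H s v - H s u| ≤ ψ u * ‖v - u‖)
    (h2 : ∀ s ∈ Set.Icc (0:ℝ) T, ∀ u : E d, |H s u| ≤ ψ u)
    {Cψ : ℝ} (hCψ : 0 < Cψ)
    (h4 : ∀ n : ℕ, 1 ≤ n →
      (∑' x : Fin d → ℤ, ENNReal.ofReal (ψ ((n:ℝ)⁻¹ • emb d x)^2))
        ≤ ENNReal.ofReal (Cψ * (n:ℝ)^d)) :
    ∃ C : ℝ, 0 < C ∧ ∀ n : ℕ, 1 ≤ n → ∀ s ∈ Set.Icc (0:ℝ) T,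
      (∑' x : Fin d → ℤ, ∑' y : Fin d → ℤ,
        if x ≠ y then (H s ((n:ℝ)⁻¹ • emb d y) - H s ((n:ℝ)⁻¹ • emb d x))^2
          * pgam d cg γ (y - x) else 0)
      ≤ C * (n:ℝ) ^ ((d:ℝ) - γ) := by
  obtain ⟨CN, hCN, hNear⟩ := near_le (d := d) ((d:ℝ) + γ - 2) (by linarith [hγ.2])
  obtain ⟨CF, hCF, hTail⟩ := tail_le (d := d) ((d:ℝ) + γ) (by linarith [hγ.1])
  refine ⟨cg * Cψ * (CN + 4*CF), by positivity, fun n hn s hs => ?_⟩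
  set ν : ℝ := (n:ℝ) with hνdef
  have hν1 : (1:ℝ) ≤ ν := by rw [hνdef]; exact_mod_cast hn
  have hν : (0:ℝ) < ν := by linarith
  set u : (Fin d → ℤ) → E d := fun x => (ν)⁻¹ • emb d x with hu
  set Freal : (Fin d → ℤ) → (Fin d → ℤ) → ℝ := fun x y =>
    if x ≠ y then (H s (u y) - H s (u x))^2 * pgam d cg γ (y - x) else 0 with hF
  have hFnn : ∀ x y, 0 ≤ Freal x y := by
    intro x y
    rw [hF]; simp only []
    split
    · exact mul_nonneg (sq_nonneg _) (pgam_nonneg hcg.le _)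
    · exact le_refl 0
  set P : (Fin d → ℤ) → ℝ≥0∞ := fun x => ENNReal.ofReal (ψ (u x)^2) with hP
  set N : (Fin d → ℤ) → ℝ≥0∞ := fun z =>
    if z ≠ 0 ∧ ‖emb d z‖ ≤ ν then ENNReal.ofReal (‖emb d z‖ ^ (-((d:ℝ) + γ - 2))) else 0 with hN
  set Fz : (Fin d → ℤ) → ℝ≥0∞ := fun z =>
    if ν < ‖emb d z‖ then ENNReal.ofReal (‖emb d z‖ ^ (-((d:ℝ) + γ))) else 0 with hFz
  set c2 : ℝ≥0∞ := ENNReal.ofReal ((ν⁻¹)^2) with hc2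
  -- shift identity
  have hushift : ∀ x z : Fin d → ℤ, u (z + x) = u x + ν⁻¹ • emb d z := by
    intro x z
    rw [hu]; simp only []
    rw [emb_add z x, smul_add]
    abel
  have hnormz : ∀ z : Fin d → ℤ, ‖ν⁻¹ • emb d z‖ = ν⁻¹ * ‖emb d z‖ := by
    intro z
    rw [norm_smul, Real.norm_eq_abs, abs_of_pos (inv_pos.2 hν)]
  -- pointwise claim
  have claim : ∀ x z : Fin d → ℤ, ENNReal.ofReal (Freal x (z + x))
      ≤ ENNReal.ofReal cg * (c2 * P x * N z + (2 * P x + 2 * P (z + x)) * Fz z) := by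
    intro x z
    by_cases hz : z = 0
    · subst hz
      rw [hF]; simp only [zero_add]
      rw [if_neg (by simp)]
      simp
    · have hxz : x ≠ z + x := by
        intro hcon
        exact hz (by simpa using hcon.symm)
      have hzsub : (z + x) - x = z := by abel
      have hz1 : (1:ℝ) ≤ ‖emb d z‖ := one_le_norm_emb hz
      have hz0 : (0:ℝ) < ‖emb d z‖ := by linarith
      have hFeq : Freal x (z + x)
          = (H s (u (z+x)) - H s (u x))^2 * (cg * ‖emb d z‖ ^ (-((d : ℝ) + γ))) := by
        rw [hF]; simp only []
        rw [if_pos hxz, hzsub]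
        unfold pgam
        rw [if_neg hz]
      by_cases hnear : ‖emb d z‖ ≤ ν
      · -- near case
        have hFz0 : Fz z = 0 := by rw [hFz]; simp only []; rw [if_neg (by push_neg; exact hnear)]
        have hNz : N z = ENNReal.ofReal (‖emb d z‖ ^ (-((d:ℝ) + γ - 2))) := by
          rw [hN]; simp only []; rw [if_pos ⟨hz, hnear⟩]
        have hd1 : ‖u (z+x) - u x‖ = ν⁻¹ * ‖emb d z‖ := by
          rw [hushift x z]; simp only [add_sub_cancel_left]; exact hnormz z
        have hle1 : ‖u (z+x) - u x‖ ≤ 1 := by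
          rw [hd1]
          have hmm : ν⁻¹ * ‖emb d z‖ ≤ ν⁻¹ * ν := mul_le_mul_of_nonneg_left hnear (inv_pos.2 hν).le
          rwa [inv_mul_cancel₀ hν.ne'] at hmm
        have hΔ : |H s (u (z+x)) - H s (u x)| ≤ ψ (u x) * (ν⁻¹ * ‖emb d z‖) := by
          have := h1 s hs (u x) (u (z+x)) hle1
          rwa [hd1] at this
        have hΔ2 : (H s (u (z+x)) - H s (u x))^2 ≤ ψ (u x)^2 * ((ν⁻¹)^2 * ‖emb d z‖^2) := by
          have h' : (H s (u (z+x)) - H s (u x))^2 ≤ (ψ (u x) * (ν⁻¹ * ‖emb d z‖))^2 := by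
            rw [← sq_abs]
            exact pow_le_pow_left₀ (abs_nonneg _) hΔ 2
          calc (H s (u (z+x)) - H s (u x))^2 ≤ (ψ (u x) * (ν⁻¹ * ‖emb d z‖))^2 := h'
            _ = ψ (u x)^2 * ((ν⁻¹)^2 * ‖emb d z‖^2) := by ring
        have hzz : ‖emb d z‖^2 * ‖emb d z‖ ^ (-((d : ℝ) + γ))
            = ‖emb d z‖ ^ (-((d:ℝ) + γ - 2)) := by
          rw [← Real.rpow_natCast ‖emb d z‖ 2, ← Real.rpow_add hz0]
          congr 1
          push_cast
          ring
        have hreal : Freal x (z + x)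
            ≤ cg * ((ν⁻¹)^2 * (ψ (u x)^2 * ‖emb d z‖ ^ (-((d:ℝ) + γ - 2)))) := by
          rw [hFeq, ← hzz]
          have hrnn : (0:ℝ) ≤ ‖emb d z‖ ^ (-((d : ℝ) + γ)) := Real.rpow_nonneg hz0.le _
          calc (H s (u (z+x)) - H s (u x))^2 * (cg * ‖emb d z‖ ^ (-((d : ℝ) + γ)))
              ≤ (ψ (u x)^2 * ((ν⁻¹)^2 * ‖emb d z‖^2)) * (cg * ‖emb d z‖ ^ (-((d : ℝ) + γ))) := by
                exact mul_le_mul_of_nonneg_right hΔ2 (by positivity)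
            _ = cg * ((ν⁻¹)^2 * (ψ (u x)^2 * (‖emb d z‖^2 * ‖emb d z‖ ^ (-((d : ℝ) + γ))))) := by
                ring
        calc ENNReal.ofReal (Freal x (z + x))
            ≤ ENNReal.ofReal (cg * ((ν⁻¹)^2 * (ψ (u x)^2 * ‖emb d z‖ ^ (-((d:ℝ) + γ - 2))))) :=
              ENNReal.ofReal_le_ofReal hreal
          _ = ENNReal.ofReal cg * (c2 * P x * N z) := by
              rw [hNz, hc2, hP]
              rw [ENNReal.ofReal_mul hcg.le, ENNReal.ofReal_mul (by positivity),
                ENNReal.ofReal_mul (by positivity)]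
              ring
          _ ≤ ENNReal.ofReal cg * (c2 * P x * N z + (2 * P x + 2 * P (z + x)) * Fz z) :=
              mul_le_mul' le_rfl le_self_add
      · -- far case
        push_neg at hnear
        have hN0 : N z = 0 := by
          rw [hN]; simp only []
          rw [if_neg (by rintro ⟨-, hle⟩; linarith)]
        have hFzz : Fz z = ENNReal.ofReal (‖emb d z‖ ^ (-((d:ℝ) + γ))) := by
          rw [hFz]; simp only []; rw [if_pos hnear]
        have hΔ : |H s (u (z+x)) - H s (u x)| ≤ ψ (u (z+x)) + ψ (u x) := by
          calc |H s (u (z+x)) - H s (u x)| ≤ |H s (u (z+x))| + |H s (u x)| := abs_sub _ _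
            _ ≤ ψ (u (z+x)) + ψ (u x) :=
              add_le_add (h2 s hs (u (z+x))) (h2 s hs (u x))
        have hΔ2 : (H s (u (z+x)) - H s (u x))^2 ≤ 2 * ψ (u x)^2 + 2 * ψ (u (z+x))^2 := by
          have h' : (H s (u (z+x)) - H s (u x))^2 ≤ (ψ (u (z+x)) + ψ (u x))^2 := by
            rw [← sq_abs]
            exact pow_le_pow_left₀ (abs_nonneg _) hΔ 2
          nlinarith [sq_nonneg (ψ (u (z+x)) - ψ (u x))]
        have hreal : Freal x (z + x)
            ≤ cg * ((2 * ψ (u x)^2 + 2 * ψ (u (z+x))^2) * ‖emb d z‖ ^ (-((d:ℝ) + γ))) := by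
          rw [hFeq]
          have hrnn : (0:ℝ) ≤ ‖emb d z‖ ^ (-((d : ℝ) + γ)) := Real.rpow_nonneg hz0.le _
          calc (H s (u (z+x)) - H s (u x))^2 * (cg * ‖emb d z‖ ^ (-((d : ℝ) + γ)))
              ≤ (2 * ψ (u x)^2 + 2 * ψ (u (z+x))^2) * (cg * ‖emb d z‖ ^ (-((d : ℝ) + γ))) :=
                mul_le_mul_of_nonneg_right hΔ2 (by positivity)
            _ = cg * ((2 * ψ (u x)^2 + 2 * ψ (u (z+x))^2) * ‖emb d z‖ ^ (-((d:ℝ) + γ))) := by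
                ring
        calc ENNReal.ofReal (Freal x (z + x))
            ≤ ENNReal.ofReal (cg * ((2 * ψ (u x)^2 + 2 * ψ (u (z+x))^2)
                * ‖emb d z‖ ^ (-((d:ℝ) + γ)))) := ENNReal.ofReal_le_ofReal hreal
          _ = ENNReal.ofReal cg * ((2 * P x + 2 * P (z + x)) * Fz z) := by
              rw [hFzz, hP]
              rw [ENNReal.ofReal_mul hcg.le, ENNReal.ofReal_mul (by positivity)]
              congr 1
              congr 1
              rw [ENNReal.ofReal_add (by positivity) (by positivity),
                ENNReal.ofReal_mul (by norm_num), ENNReal.ofReal_mul (by norm_num)]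
              norm_num
          _ ≤ ENNReal.ofReal cg * (c2 * P x * N z + (2 * P x + 2 * P (z + x)) * Fz z) :=
              mul_le_mul' le_rfl le_add_self
  set SP : ℝ≥0∞ := ∑' x : Fin d → ℤ, P x with hSPd
  set SN : ℝ≥0∞ := ∑' z : Fin d → ℤ, N z with hSNd
  set SF : ℝ≥0∞ := ∑' z : Fin d → ℤ, Fz z with hSFd
  have hSPle : SP ≤ ENNReal.ofReal (Cψ * ν^d) := h4 n hn
  have hSNle : SN ≤ ENNReal.ofReal (CN * ν ^ ((2:ℝ) - γ)) := by
    have := hNear ν hν1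
    have he : (d:ℝ) - ((d:ℝ) + γ - 2) = (2:ℝ) - γ := by ring
    rwa [he] at this
  have hSFle : SF ≤ ENNReal.ofReal (CF * ν ^ (-γ)) := by
    have := hTail ν hν1
    have he : (d:ℝ) - ((d:ℝ) + γ) = -γ := by ring
    rwa [he] at this
  have hsplit : (∑' x : Fin d → ℤ, ∑' z : Fin d → ℤ,
        (c2 * P x * N z + (2 * P x + 2 * P (z + x)) * Fz z))
      = c2 * SP * SN + (2 * SP * SF + 2 * SF * SP) := by
    have inner : ∀ x : Fin d → ℤ, (∑' z : Fin d → ℤ,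
          (c2 * P x * N z + (2 * P x + 2 * P (z + x)) * Fz z))
        = c2 * P x * SN + (2 * P x * SF + ∑' z : Fin d → ℤ, (2 * Fz z) * P (z + x)) := by
      intro x
      rw [Summable.tsum_add ENNReal.summable ENNReal.summable]
      congr 1
      · exact ENNReal.tsum_mul_left
      · have e : ∀ z : Fin d → ℤ, (2 * P x + 2 * P (z + x)) * Fz z
            = 2 * P x * Fz z + (2 * Fz z) * P (z + x) := fun z => by ring
        rw [tsum_congr e, Summable.tsum_add ENNReal.summable ENNReal.summable]
        congr 1
        exact ENNReal.tsum_mul_left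
    rw [tsum_congr inner, Summable.tsum_add ENNReal.summable ENNReal.summable]
    congr 1
    · have e : ∀ x : Fin d → ℤ, c2 * P x * SN = (c2 * SN) * P x := fun x => by ring
      rw [tsum_congr e, ENNReal.tsum_mul_left]
      ring
    · rw [Summable.tsum_add ENNReal.summable ENNReal.summable]
      congr 1
      · have e : ∀ x : Fin d → ℤ, 2 * P x * SF = (2 * SF) * P x := fun x => by ring
        rw [tsum_congr e, ENNReal.tsum_mul_left]
        ring
      · rw [ENNReal.tsum_comm]
        have e : ∀ z : Fin d → ℤ, (∑' x : Fin d → ℤ, (2 * Fz z) * P (z + x))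
            = (2 * SP) * Fz z := by
          intro z
          rw [ENNReal.tsum_mul_left]
          have : (∑' x : Fin d → ℤ, P (z + x)) = SP := by
            rw [hSPd]
            exact (Equiv.addLeft z).tsum_eq P
          rw [this]
          ring
        rw [tsum_congr e, ENNReal.tsum_mul_left]
        ring
  have key : (∑' x : Fin d → ℤ, ∑' y : Fin d → ℤ, ENNReal.ofReal (Freal x y))
      ≤ ENNReal.ofReal (cg * Cψ * (CN + 4*CF) * ν ^ ((d:ℝ) - γ)) := by
    have e3 : (ν:ℝ)^d = ν ^ ((d:ℕ):ℝ) := (Real.rpow_natCast ν d).symm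
    have e4 : (ν⁻¹)^2 = ν ^ (-(2:ℝ)) := by
      rw [Real.rpow_neg hν.le]
      rw [inv_pow]
      congr 1
      rw [← Real.rpow_natCast ν 2]
      norm_num
    have e5 : ν ^ (-(2:ℝ)) * (ν ^ (((d:ℕ)):ℝ) * ν ^ ((2:ℝ)-γ)) = ν ^ ((d:ℝ)-γ) := by
      rw [← Real.rpow_add hν, ← Real.rpow_add hν]
      all_goals (congr 1 <;> push_cast <;> ring)
    have e6 : ν ^ (((d:ℕ)):ℝ) * ν ^ (-γ) = ν ^ ((d:ℝ)-γ) := by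
      rw [← Real.rpow_add hν]
      all_goals (congr 1 <;> push_cast <;> ring)
    calc (∑' x : Fin d → ℤ, ∑' y : Fin d → ℤ, ENNReal.ofReal (Freal x y))
        = ∑' x : Fin d → ℤ, ∑' z : Fin d → ℤ, ENNReal.ofReal (Freal x (z + x)) :=
          tsum_congr (fun x =>
            ((Equiv.addRight x).tsum_eq (fun y => ENNReal.ofReal (Freal x y))).symm)
      _ ≤ ∑' x : Fin d → ℤ, ∑' z : Fin d → ℤ,
            (ENNReal.ofReal cg * (c2 * P x * N z + (2 * P x + 2 * P (z + x)) * Fz z)) :=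
          ENNReal.summable.tsum_le_tsum (fun x => ENNReal.summable.tsum_le_tsum (fun z => claim x z)
            ENNReal.summable) ENNReal.summable
      _ = ENNReal.ofReal cg * ∑' x : Fin d → ℤ, ∑' z : Fin d → ℤ,
            (c2 * P x * N z + (2 * P x + 2 * P (z + x)) * Fz z) := by
          rw [← ENNReal.tsum_mul_left]
          exact tsum_congr fun x => by rw [← ENNReal.tsum_mul_left]
      _ = ENNReal.ofReal cg * (c2 * SP * SN + (2 * SP * SF + 2 * SF * SP)) := by rw [hsplit]
      _ ≤ ENNReal.ofReal cg * (c2 * ENNReal.ofReal (Cψ * ν^d) * ENNReal.ofReal (CN * ν ^ ((2:ℝ) - γ))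
            + (2 * ENNReal.ofReal (Cψ * ν^d) * ENNReal.ofReal (CF * ν ^ (-γ))
              + 2 * ENNReal.ofReal (CF * ν ^ (-γ)) * ENNReal.ofReal (Cψ * ν^d))) := by
          refine mul_le_mul' le_rfl ?_
          refine add_le_add ?_ (add_le_add ?_ ?_)
          · exact mul_le_mul' (mul_le_mul' le_rfl hSPle) hSNle
          · exact mul_le_mul' (mul_le_mul' le_rfl hSPle) hSFle
          · exact mul_le_mul' (mul_le_mul' le_rfl hSFle) hSPle
      _ = ENNReal.ofReal (cg * ((ν⁻¹)^2 * ((Cψ * ν^d) * (CN * ν ^ ((2:ℝ) - γ)))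
            + 4 * ((Cψ * ν^d) * (CF * ν ^ (-γ))))) := by
          rw [hc2]
          exact ofReal_combine hcg.le (by positivity) (by positivity) (by positivity) (by positivity)
      _ = ENNReal.ofReal (cg * Cψ * (CN + 4*CF) * ν ^ ((d:ℝ) - γ)) := by
          congr 1
          rw [e3, e4]
          linear_combination (cg*Cψ*CN) * e5 + (cg*Cψ*(4*CF)) * e6
  have goal_eq : (∑' x : Fin d → ℤ, ∑' y : Fin d → ℤ,
      if x ≠ y then (H s ((ν)⁻¹ • emb d y) - H s ((ν)⁻¹ • emb d x))^2
        * pgam d cg γ (y - x) else 0) = ∑' x : Fin d → ℤ, ∑' y : Fin d → ℤ, Freal x y := rfl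
  rw [goal_eq]
  refine real_tsum_le _ (fun x => tsum_nonneg (fun y => hFnn x y)) (by positivity) ?_
  calc (∑' x : Fin d → ℤ, ENNReal.ofReal (∑' y : Fin d → ℤ, Freal x y))
      ≤ ∑' x : Fin d → ℤ, ∑' y : Fin d → ℤ, ENNReal.ofReal (Freal x y) :=
        ENNReal.summable.tsum_le_tsum (fun x => ofReal_tsum_le _ (hFnn x)) ENNReal.summable
    _ ≤ ENNReal.ofReal (cg * Cψ * (CN + 4*CF) * ν ^ ((d:ℝ) - γ)) := key
lemma psi_of_cc (T : ℝ) (H : ℝ → E d → ℝ) (hH : MemCc12 T d H) :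
    ∃ ψ : E d → ℝ, (∀ u, 0 ≤ ψ u) ∧
      (∀ s ∈ Set.Icc (0:ℝ) T, ∀ u v : E d, ‖v - u‖ ≤ 1 →
        |H s v - H s u| ≤ ψ u * ‖v - u‖) ∧
      (∀ s ∈ Set.Icc (0:ℝ) T, ∀ u : E d, |H s u| ≤ ψ u) ∧
      ∃ Cψ : ℝ, 0 < Cψ ∧ ∀ n : ℕ, 1 ≤ n →
        (∑' x : Fin d → ℤ, ENNReal.ofReal (ψ ((n:ℝ)⁻¹ • emb d x)^2))
          ≤ ENNReal.ofReal (Cψ * (n:ℝ)^d) := by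
  obtain ⟨K, hK, hKz⟩ := hH.csupp
  obtain ⟨R', hR'⟩ := hK.isBounded.subset_closedBall 0
  set R : ℝ := max R' 0 with hRdef
  have hR0 : 0 ≤ R := le_max_right _ _
  have hRK : K ⊆ Metric.closedBall 0 R :=
    hR'.trans (Metric.closedBall_subset_closedBall (le_max_left _ _))
  have hKout : ∀ s ∈ Set.Icc (0:ℝ) T, ∀ w : E d, R < ‖w‖ → H s w = 0 := by
    intro s hs w hw
    refine hKz s hs w fun hmem => ?_
    have := hRK hmem
    rw [Metric.mem_closedBall, dist_zero_right] at this
    linarith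
  set g : ℝ × E d → ℝ := fun p => |H p.1 p.2| + ∑ j, |pd d (H p.1) j p.2| with hg
  have hgc : ContinuousOn g (Set.Icc (0:ℝ) T ×ˢ Set.univ) := by
    refine ContinuousOn.add (hH.mem.cont.abs) ?_
    exact continuousOn_finset_sum Finset.univ (fun j _ => (hH.mem.cont1 j).abs)
  have hgnn : ∀ p, 0 ≤ g p := by
    intro p
    exact add_nonneg (abs_nonneg _) (Finset.sum_nonneg fun j _ => abs_nonneg _)
  set Kc : Set (ℝ × E d) := Set.Icc (0:ℝ) T ×ˢ Metric.closedBall (0 : E d) (R+2) with hKc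
  have hKcc : IsCompact Kc := isCompact_Icc.prod (isCompact_closedBall _ _)
  obtain ⟨C₁, hC₁⟩ := hKcc.exists_bound_of_continuousOn
    (hgc.mono (Set.prod_mono subset_rfl (Set.subset_univ _)))
  set C₀ : ℝ := max C₁ 0 with hC₀def
  have hC₀0 : 0 ≤ C₀ := le_max_right _ _
  have hgb : ∀ s ∈ Set.Icc (0:ℝ) T, ∀ w : E d, ‖w‖ ≤ R + 2 → g (s, w) ≤ C₀ := by
    intro s hs w hw
    have hmem : (s, w) ∈ Kc := by
      refine ⟨hs, ?_⟩
      rw [Metric.mem_closedBall, dist_zero_right]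
      exact hw
    calc g (s, w) ≤ |g (s, w)| := le_abs_self _
      _ ≤ C₁ := by have := hC₁ (s, w) hmem; rwa [Real.norm_eq_abs] at this
      _ ≤ C₀ := le_max_left _ _
  refine ⟨fun u => if ‖u‖ ≤ R + 1 then C₀ else 0, ?_, ?_, ?_, ?_⟩
  · intro u; dsimp only; split <;> simp [hC₀0]
  · -- Lipschitz-type bound
    intro s hs u v hle
    dsimp only
    by_cases h : ‖u‖ ≤ R + 1
    · rw [if_pos h]
      refine diff_le (H s) ((hH.mem.smooth s hs).differentiable (by norm_num)) u v C₀ ?_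
      intro w hw
      have hwu : ‖w - u‖ ≤ 1 := le_trans (seg_dist u v w hw) hle
      have hwn : ‖w‖ ≤ R + 2 := by
        have h5 := norm_sub_norm_le w u
        linarith
      calc (∑ j, |pd d (H s) j w|) ≤ g (s, w) := le_add_of_nonneg_left (abs_nonneg _)
        _ ≤ C₀ := hgb s hs w hwn
    · rw [if_neg h]
      push_neg at h
      have hu0 : H s u = 0 := hKout s hs u (by linarith)
      have hv0 : H s v = 0 := by
        refine hKout s hs v ?_
        have h1 : ‖u‖ - ‖v‖ ≤ ‖u - v‖ := norm_sub_norm_le u v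
        have h2 : ‖u - v‖ = ‖v - u‖ := norm_sub_rev u v
        linarith
      rw [hu0, hv0]
      simp
  · -- pointwise bound
    intro s hs u
    dsimp only
    by_cases h : ‖u‖ ≤ R + 1
    · rw [if_pos h]
      calc |H s u| ≤ g (s, u) := le_add_of_nonneg_right (Finset.sum_nonneg fun j _ => abs_nonneg _)
        _ ≤ C₀ := hgb s hs u (by linarith)
    · rw [if_neg h]
      push_neg at h
      rw [hKout s hs u (by linarith)]
      simp
  · -- summability bound
    refine ⟨C₀^2 * (2*R+3)^d + 1, by positivity, fun n hn => ?_⟩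
    have hν1 : (1:ℝ) ≤ (n:ℝ) := by exact_mod_cast hn
    have hν : (0:ℝ) < (n:ℝ) := by linarith
    calc (∑' x : Fin d → ℤ, ENNReal.ofReal ((if ‖(n:ℝ)⁻¹ • emb d x‖ ≤ R + 1 then C₀ else 0)^2))
        ≤ ∑' x : Fin d → ℤ, ENNReal.ofReal (C₀^2) *
            (if ‖emb d x‖ ≤ (R+1) * n then (1:ℝ≥0∞) else 0) := by
          refine ENNReal.summable.tsum_le_tsum (fun x => ?_) ENNReal.summable
          have hnorm : ‖(n:ℝ)⁻¹ • emb d x‖ = (n:ℝ)⁻¹ * ‖emb d x‖ := by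
            rw [norm_smul, Real.norm_eq_abs, abs_of_pos (inv_pos.2 hν)]
          by_cases hx : ‖(n:ℝ)⁻¹ • emb d x‖ ≤ R + 1
          · rw [if_pos hx, if_pos, mul_one]
            rw [hnorm] at hx
            calc ‖emb d x‖ = (n:ℝ) * ((n:ℝ)⁻¹ * ‖emb d x‖) := by
                  field_simp
              _ ≤ (R+1) * n := by nlinarith
          · rw [if_neg hx]
            simp
    _ = ENNReal.ofReal (C₀^2) * ∑' x : Fin d → ℤ,
          (if ‖emb d x‖ ≤ (R+1) * n then (1:ℝ≥0∞) else 0) := ENNReal.tsum_mul_left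
    _ ≤ ENNReal.ofReal (C₀^2) * ENNReal.ofReal ((2*((R+1)*n)+1)^d) :=
        mul_le_mul' le_rfl (count_le (by positivity))
    _ ≤ ENNReal.ofReal ((C₀^2 * (2*R+3)^d + 1) * (n:ℝ)^d) := by
        rw [← ENNReal.ofReal_mul (by positivity)]
        refine ENNReal.ofReal_le_ofReal ?_
        have h1 : (2*((R+1)*(n:ℝ))+1)^d ≤ ((2*R+3)*(n:ℝ))^d := by
          refine pow_le_pow_left₀ (by positivity) (by nlinarith) d
        have h2 : ((2*R+3)*(n:ℝ))^d = (2*R+3)^d * (n:ℝ)^d := mul_pow _ _ d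
        have h3 : (0:ℝ) ≤ (n:ℝ)^d := by positivity
        nlinarith [sq_nonneg C₀, mul_le_mul_of_nonneg_left h1 (sq_nonneg C₀)]
lemma bracket_eq2 (G : ℝ → E d → ℝ) (s : ℝ) (u : E d) :
    bracket d G 2 s u = |G s u| + ∑ j, |pd d (G s) j u|
      + ∑ i, ∑ j, |pd d (fun w => pd d (G s) j w) i u| := by
  unfold bracket
  norm_num

lemma bracket_nn (G : ℝ → E d → ℝ) (s : ℝ) (u : E d) : 0 ≤ bracket d G 2 s u := by
  rw [bracket_eq2]
  positivity

lemma psi_of_s12 (T : ℝ) (H : ℝ → E d → ℝ) (hH : MemS12 T d H) :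
    ∃ ψ : E d → ℝ, (∀ u, 0 ≤ ψ u) ∧
      (∀ s ∈ Set.Icc (0:ℝ) T, ∀ u v : E d, ‖v - u‖ ≤ 1 →
        |H s v - H s u| ≤ ψ u * ‖v - u‖) ∧
      (∀ s ∈ Set.Icc (0:ℝ) T, ∀ u : E d, |H s u| ≤ ψ u) ∧
      ∃ Cψ : ℝ, 0 < Cψ ∧ ∀ n : ℕ, 1 ≤ n →
        (∑' x : Fin d → ℤ, ENNReal.ofReal (ψ ((n:ℝ)⁻¹ • emb d x)^2))
          ≤ ENNReal.ofReal (Cψ * (n:ℝ)^d) := by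
  obtain ⟨CF2, hCF2, hTail2⟩ := tail_le (d := d) (2*(d:ℝ)+2)
    (by have : (0:ℝ) ≤ (d:ℝ) := Nat.cast_nonneg d; linarith)
  set B : ℝ → E d → ℝ := fun s u => |H s u| + ∑ j, |pd d (H s) j u| with hBdef
  have hBnn : ∀ s u, 0 ≤ B s u := fun s u =>
    add_nonneg (abs_nonneg _) (Finset.sum_nonneg fun j _ => abs_nonneg _)
  obtain ⟨c0, hc0⟩ := hH.bdd 0
  obtain ⟨c1, hc1⟩ := hH.bdd (d+1)
  set D₀ : ℝ := max c0 0 with hD₀def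
  set D : ℝ := max c1 0 with hDdef
  have hD₀nn : 0 ≤ D₀ := le_max_right _ _
  have hDnn : 0 ≤ D := le_max_right _ _
  have hBbr : ∀ s u, B s u ≤ bracket d H 2 s u := by
    intro s u
    rw [bracket_eq2]
    exact le_add_of_nonneg_right (by positivity)
  have hBD0 : ∀ s ∈ Set.Icc (0:ℝ) T, ∀ u : E d, B s u ≤ D₀ := by
    intro s hs u
    have hm := hc0 (Set.mem_range_self (⟨⟨s, hs⟩, u⟩ : Set.Icc (0:ℝ) T × E d))
    simp only [pow_zero, one_mul] at hm
    have := bracket_nn (tderiv d H) s u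
    calc B s u ≤ bracket d H 2 s u := hBbr s u
      _ ≤ bracket d H 2 s u + bracket d (tderiv d H) 2 s u := le_add_of_nonneg_right this
      _ ≤ c0 := hm
      _ ≤ D₀ := le_max_left _ _
  have hBD1 : ∀ s ∈ Set.Icc (0:ℝ) T, ∀ u : E d, ‖u‖^(d+1) * B s u ≤ D := by
    intro s hs u
    have hm := hc1 (Set.mem_range_self (⟨⟨s, hs⟩, u⟩ : Set.Icc (0:ℝ) T × E d))
    have := bracket_nn (tderiv d H) s u
    calc ‖u‖^(d+1) * B s u ≤ ‖u‖^(d+1) * (bracket d H 2 s u + bracket d (tderiv d H) 2 s u) := by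
          refine mul_le_mul_of_nonneg_left ?_ (by positivity)
          linarith [hBbr s u]
      _ ≤ c1 := hm
      _ ≤ D := le_max_left _ _
  refine ⟨fun u => if ‖u‖ ≤ 2 then D₀ else D * 2^(d+1) / ‖u‖^(d+1), ?_, ?_, ?_, ?_⟩
  · intro u; dsimp only; split
    · exact hD₀nn
    · exact div_nonneg (by positivity) (by positivity)
  · intro s hs u v hle
    dsimp only
    by_cases h : ‖u‖ ≤ 2
    · rw [if_pos h]
      refine diff_le (H s) ((hH.mem.smooth s hs).differentiable (by norm_num)) u v D₀ ?_
      intro w hw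
      calc (∑ j, |pd d (H s) j w|) ≤ B s w := le_add_of_nonneg_left (abs_nonneg _)
        _ ≤ D₀ := hBD0 s hs w
    · rw [if_neg h]
      push_neg at h
      refine diff_le (H s) ((hH.mem.smooth s hs).differentiable (by norm_num)) u v _ ?_
      intro w hw
      have hwu : ‖w - u‖ ≤ 1 := le_trans (seg_dist u v w hw) hle
      have hw2 : ‖u‖/2 ≤ ‖w‖ := by
        have h5 : ‖u‖ - ‖w‖ ≤ ‖u - w‖ := norm_sub_norm_le u w
        have h6 : ‖u - w‖ = ‖w - u‖ := norm_sub_rev u w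
        linarith
      have hwpos : (0:ℝ) < ‖w‖ := by linarith
      have hBw : B s w ≤ D / ‖w‖^(d+1) := by
        rw [le_div_iff₀ (by positivity)]
        calc B s w * ‖w‖^(d+1) = ‖w‖^(d+1) * B s w := mul_comm _ _
          _ ≤ D := hBD1 s hs w
      have hmono : D / ‖w‖^(d+1) ≤ D * 2^(d+1) / ‖u‖^(d+1) := by
        rw [div_le_div_iff₀ (by positivity) (by positivity)]
        have h6 : ‖u‖^(d+1) ≤ (2*‖w‖)^(d+1) :=
          pow_le_pow_left₀ (norm_nonneg u) (by linarith) _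
        rw [mul_pow] at h6
        have := mul_le_mul_of_nonneg_left h6 hDnn
        nlinarith
      calc (∑ j, |pd d (H s) j w|) ≤ B s w := le_add_of_nonneg_left (abs_nonneg _)
        _ ≤ D / ‖w‖^(d+1) := hBw
        _ ≤ D * 2^(d+1) / ‖u‖^(d+1) := hmono
  · intro s hs u
    dsimp only
    by_cases h : ‖u‖ ≤ 2
    · rw [if_pos h]
      calc |H s u| ≤ B s u := le_add_of_nonneg_right (by positivity)
        _ ≤ D₀ := hBD0 s hs u
    · rw [if_neg h]
      push_neg at h
      have hupos : (0:ℝ) < ‖u‖ := by linarith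
      have hBu : B s u ≤ D / ‖u‖^(d+1) := by
        rw [le_div_iff₀ (by positivity)]
        calc B s u * ‖u‖^(d+1) = ‖u‖^(d+1) * B s u := mul_comm _ _
          _ ≤ D := hBD1 s hs u
      have h2p : (1:ℝ) ≤ 2^(d+1) := by
        calc (1:ℝ) = 1^(d+1) := (one_pow _).symm
          _ ≤ 2^(d+1) := pow_le_pow_left₀ (by norm_num) (by norm_num) _
      calc |H s u| ≤ B s u := le_add_of_nonneg_right (by positivity)
        _ ≤ D / ‖u‖^(d+1) := hBu
        _ ≤ D * 2^(d+1) / ‖u‖^(d+1) := by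
            have h8 : D ≤ D * 2^(d+1) := le_mul_of_one_le_right hDnn h2p
            rw [div_le_div_iff₀ (by positivity) (by positivity)]
            nlinarith [pow_pos hupos (d+1), mul_le_mul_of_nonneg_right h8 (pow_nonneg hupos.le (d+1))]
  · refine ⟨D₀^2 * 5^d + (D*2^(d+1))^2 * CF2 + 1, by positivity, fun n hn => ?_⟩
    set ν : ℝ := (n:ℝ) with hνdef
    have hν1 : (1:ℝ) ≤ ν := by rw [hνdef]; exact_mod_cast hn
    have hν : (0:ℝ) < ν := by linarith
    have hnorm : ∀ x : Fin d → ℤ, ‖(ν)⁻¹ • emb d x‖ = ν⁻¹ * ‖emb d x‖ := by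
      intro x
      rw [norm_smul, Real.norm_eq_abs, abs_of_pos (inv_pos.2 hν)]
    calc (∑' x : Fin d → ℤ, ENNReal.ofReal
            ((if ‖(ν)⁻¹ • emb d x‖ ≤ 2 then D₀ else D * 2^(d+1) / ‖(ν)⁻¹ • emb d x‖^(d+1))^2))
        ≤ ∑' x : Fin d → ℤ, (ENNReal.ofReal (D₀^2) * (if ‖emb d x‖ ≤ 2*ν then (1:ℝ≥0∞) else 0)
            + ENNReal.ofReal ((D*2^(d+1))^2 * ν^(2*d+2)) *
              (if 2*ν < ‖emb d x‖ then ENNReal.ofReal (‖emb d x‖^(-(2*(d:ℝ)+2))) else 0)) := by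
          refine ENNReal.summable.tsum_le_tsum (fun x => ?_) ENNReal.summable
          by_cases hx : ‖(ν)⁻¹ • emb d x‖ ≤ 2
          · rw [if_pos hx]
            have hcond : ‖emb d x‖ ≤ 2*ν := by
              rw [hnorm x] at hx
              calc ‖emb d x‖ = ν * (ν⁻¹ * ‖emb d x‖) := by field_simp
                _ ≤ 2*ν := by nlinarith
            rw [if_pos hcond, mul_one]
            exact le_self_add
          · rw [if_neg hx]
            push_neg at hx
            have hcond : 2*ν < ‖emb d x‖ := by
              rw [hnorm x] at hx
              have h9 : ν * 2 < ν * (ν⁻¹ * ‖emb d x‖) := mul_lt_mul_of_pos_left hx hν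
              rw [← mul_assoc, mul_inv_cancel₀ (ne_of_gt hν), one_mul] at h9
              linarith
            have hm0 : (0:ℝ) < ‖emb d x‖ := by linarith
            rw [if_neg (not_le.mpr hcond), mul_zero, zero_add, if_pos hcond]
            rw [← ENNReal.ofReal_mul (by positivity)]
            refine ENNReal.ofReal_le_ofReal (le_of_eq ?_)
            have hmr : ‖emb d x‖^(-(2*(d:ℝ)+2)) = (‖emb d x‖^(2*d+2:ℕ))⁻¹ := by
              rw [← Real.rpow_natCast ‖emb d x‖ (2*d+2), ← Real.rpow_neg hm0.le]
              congr 1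
              push_cast
              ring
            rw [hnorm x, hmr]
            have hν0 : ν ≠ 0 := ne_of_gt hν
            have hm0' : ‖emb d x‖ ≠ 0 := ne_of_gt hm0
            field_simp
            have h1 : ν ^ 2 * ν⁻¹ ^ 2 = 1 := by rw [← mul_pow, mul_inv_cancel₀ hν0, one_pow]
            have h2 : ν ^ (d*2) * ν⁻¹ ^ (d*2) = 1 := by rw [← mul_pow, mul_inv_cancel₀ hν0, one_pow]
            linear_combination (-(D ^ 2 * ‖emb d x‖ ^ 2 * ‖emb d x‖ ^ (d * 2)) * (ν ^ (d*2) * ν⁻¹ ^ (d*2))) * h1 + (-(D ^ 2 * ‖emb d x‖ ^ 2 * ‖emb d x‖ ^ (d * 2))) * h2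
      _ = ENNReal.ofReal (D₀^2) * (∑' x : Fin d → ℤ, (if ‖emb d x‖ ≤ 2*ν then (1:ℝ≥0∞) else 0))
          + ENNReal.ofReal ((D*2^(d+1))^2 * ν^(2*d+2)) * (∑' x : Fin d → ℤ,
              (if 2*ν < ‖emb d x‖ then ENNReal.ofReal (‖emb d x‖^(-(2*(d:ℝ)+2))) else 0)) := by
          rw [Summable.tsum_add ENNReal.summable ENNReal.summable, ENNReal.tsum_mul_left,
            ENNReal.tsum_mul_left]
      _ ≤ ENNReal.ofReal (D₀^2) * ENNReal.ofReal ((2*(2*ν)+1)^d)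
          + ENNReal.ofReal ((D*2^(d+1))^2 * ν^(2*d+2)) *
            ENNReal.ofReal (CF2 * (2*ν)^((d:ℝ) - (2*(d:ℝ)+2))) :=
          add_le_add (mul_le_mul' le_rfl (count_le (by positivity)))
            (mul_le_mul' le_rfl (hTail2 (2*ν) (by linarith)))
      _ ≤ ENNReal.ofReal ((D₀^2 * 5^d + (D*2^(d+1))^2 * CF2 + 1) * ν^d) := by
          rw [← ENNReal.ofReal_mul (by positivity), ← ENNReal.ofReal_mul (by positivity),
            ← ENNReal.ofReal_add (by positivity) (by positivity)]
          refine ENNReal.ofReal_le_ofReal ?_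
          have hb1 : D₀^2 * (2*(2*ν)+1)^d ≤ D₀^2 * 5^d * ν^d := by
            have h7 : (2*(2*ν)+1)^d ≤ (5*ν)^d :=
              pow_le_pow_left₀ (by positivity) (by linarith) d
            rw [mul_pow] at h7
            nlinarith [sq_nonneg D₀]
          have he : (d:ℝ) - (2*(d:ℝ)+2) = -((d:ℝ)+2) := by ring
          have hb2' : (2*ν)^((d:ℝ) - (2*(d:ℝ)+2)) ≤ ν^(-((d:ℝ)+2)) := by
            rw [he]
            exact rpow_anti hν (by linarith) (by positivity)
          have hb3 : ν^(2*d+2) * ν^(-((d:ℝ)+2)) = ν^d := by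
            rw [← Real.rpow_natCast ν (2*d+2), ← Real.rpow_add hν, ← Real.rpow_natCast ν d]
            congr 1
            push_cast
            ring
          have hb2 : (D*2^(d+1))^2 * ν^(2*d+2) * (CF2 * (2*ν)^((d:ℝ) - (2*(d:ℝ)+2)))
              ≤ (D*2^(d+1))^2 * CF2 * ν^d := by
            calc (D*2^(d+1))^2 * ν^(2*d+2) * (CF2 * (2*ν)^((d:ℝ) - (2*(d:ℝ)+2)))
                ≤ (D*2^(d+1))^2 * ν^(2*d+2) * (CF2 * ν^(-((d:ℝ)+2))) := by
                  refine mul_le_mul_of_nonneg_left ?_ (by positivity)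
                  exact mul_le_mul_of_nonneg_left hb2' hCF2.le
              _ = (D*2^(d+1))^2 * CF2 * (ν^(2*d+2) * ν^(-((d:ℝ)+2))) := by ring
              _ = (D*2^(d+1))^2 * CF2 * ν^d := by rw [hb3]
          have hexp : (D₀^2 * 5^d + (D*2^(d+1))^2 * CF2 + 1) * ν^d
              = D₀^2 * 5^d * ν^d + (D*2^(d+1))^2 * CF2 * ν^d + ν^d := by ring
          rw [hexp]
          have : (0:ℝ) ≤ ν^d := by positivity
          linarith

end AuxStmt13

theorem stmt13 (d : ℕ) (hd : 0 < d) (γ cg T : ℝ) (hγ : γ ∈ Set.Ioo (0:ℝ) 2) (hcg : 0 < cg)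
    (hT : 0 < T) (H : ℝ → E d → ℝ) (hH : MemSgam T d γ H) :
    ∃ C : ℝ, 0 < C ∧ ∀ n : ℕ, 1 ≤ n →
      (⨆ s : Set.Icc (0:ℝ) T, (n : ℝ) ^ γ / (n : ℝ) ^ (2 * d) *
        ∑' x : Fin d → ℤ, ∑' y : Fin d → ℤ,
          if x ≠ y then
            (H s ((n : ℝ)⁻¹ • emb d y) - H s ((n : ℝ)⁻¹ • emb d x)) ^ 2 * pgam d cg γ (y - x)
          else 0)
      ≤ C * ((n : ℝ) + (n : ℝ) ^ γ) / (n : ℝ) ^ (d + 1) := by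
  have hψ : ∃ ψ : E d → ℝ, (∀ u, 0 ≤ ψ u) ∧
      (∀ s ∈ Set.Icc (0:ℝ) T, ∀ u v : E d, ‖v - u‖ ≤ 1 →
        |H s v - H s u| ≤ ψ u * ‖v - u‖) ∧
      (∀ s ∈ Set.Icc (0:ℝ) T, ∀ u : E d, |H s u| ≤ ψ u) ∧
      ∃ Cψ : ℝ, 0 < Cψ ∧ ∀ n : ℕ, 1 ≤ n →
        (∑' x : Fin d → ℤ, ENNReal.ofReal (ψ ((n:ℝ)⁻¹ • emb d x)^2))
          ≤ ENNReal.ofReal (Cψ * (n:ℝ)^d) := by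
    unfold MemSgam at hH
    split_ifs at hH with hcase
    · exact psi_of_s12 T H hH
    · exact psi_of_cc T H hH
  obtain ⟨ψ, hψ0, h1, h2, Cψ, hCψ, h4⟩ := hψ
  obtain ⟨C1, hC1, hmain⟩ := main_bound γ cg T hγ hcg H ψ hψ0 h1 h2 hCψ h4
  refine ⟨max C1 1, lt_of_lt_of_le one_pos (le_max_right _ _), fun n hn => ?_⟩
  have hν1 : (1:ℝ) ≤ (n:ℝ) := by exact_mod_cast hn
  have hν : (0:ℝ) < (n:ℝ) := by linarith
  have hRHS : 0 ≤ max C1 1 * ((n:ℝ) + (n:ℝ)^γ) / (n:ℝ)^(d+1) := by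
    have : (0:ℝ) < max C1 1 := lt_of_lt_of_le one_pos (le_max_right _ _)
    positivity
  refine Real.iSup_le (fun s => ?_) hRHS
  have hS := hmain n hn (s : ℝ) s.2
  have hprefac : (0:ℝ) ≤ (n:ℝ)^γ / (n:ℝ)^(2*d) := by positivity
  calc (n : ℝ) ^ γ / (n : ℝ) ^ (2 * d) *
        ∑' x : Fin d → ℤ, ∑' y : Fin d → ℤ,
          (if x ≠ y then
            (H s ((n : ℝ)⁻¹ • emb d y) - H s ((n : ℝ)⁻¹ • emb d x)) ^ 2 * pgam d cg γ (y - x)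
          else 0)
      ≤ (n:ℝ)^γ / (n:ℝ)^(2*d) * (C1 * (n:ℝ)^((d:ℝ)-γ)) :=
        mul_le_mul_of_nonneg_left hS hprefac
    _ = C1 * (n:ℝ) / (n:ℝ)^(d+1) := by
        have hprod : (n:ℝ)^γ * (n:ℝ)^((d:ℝ)-γ) = (n:ℝ)^((d:ℝ)) := by
          rw [← Real.rpow_add hν]
          congr 1
          ring
        have hnd : (n:ℝ)^((d:ℝ)) = (n:ℝ)^d := Real.rpow_natCast _ d
        calc (n:ℝ)^γ / (n:ℝ)^(2*d) * (C1 * (n:ℝ)^((d:ℝ)-γ))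
            = C1 * ((n:ℝ)^γ * (n:ℝ)^((d:ℝ)-γ)) / (n:ℝ)^(2*d) := by ring
          _ = C1 * (n:ℝ)^d / (n:ℝ)^(2*d) := by rw [hprod, hnd]
          _ = C1 * (n:ℝ) / (n:ℝ)^(d+1) := by
              rw [div_eq_div_iff (by positivity) (by positivity)]
              ring
    _ ≤ max C1 1 * ((n:ℝ) + (n:ℝ)^γ) / (n:ℝ)^(d+1) := by
        have hg0 : 0 ≤ (n:ℝ)^γ := Real.rpow_nonneg hν.le γ
        have hc : C1 ≤ max C1 1 := le_max_left _ _
        have hM0 : (0:ℝ) ≤ max C1 1 := le_trans zero_le_one (le_max_right _ _)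
        have hnum : C1 * (n:ℝ) ≤ max C1 1 * ((n:ℝ) + (n:ℝ)^γ) := by
          nlinarith [mul_le_mul_of_nonneg_right hc hν.le, mul_nonneg hM0 hg0]
        exact div_le_div_of_nonneg_right hnum (by positivity)

end
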